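/- Let D be a non-trivial (v,k,λ)-symmetric design with λ < k, and let A be the adjacency matrix over ℝ of the flag-graph Γ₁(D). Then the characteristic polynomial of A equals (X − (2k−2)) · (X − (k−2+√(k−λ)))^{v−1} · (X − (k−2−√(k−λ)))^{v−1} · (X + 2)^{vk−2v+1}, where √(k−λ) denotes the real square root of k−λ. -/

import Mathlib

/-- A `(v,b,r,k,lam)`-balanced incomplete block design: a finite set of `v` points and a
family of `b` distinct blocks, each block a `k`-element subset of the points with
`1 < k < v`, such that every point lies in exactly `r` blocks and every pair of distinct
points is contained in exactly `lam` blocks (all parameters positive). -/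
structure BIBD (v b r k lam : ℕ) where
  P : Type
  [fintypeP : Fintype P]
  [decEqP : DecidableEq P]
  blocks : Finset (Finset P)
  card_points : Fintype.card P = v
  card_blocks : blocks.card = b
  block_size : ∀ c ∈ blocks, c.card = k
  one_lt_k : 1 < k
  k_lt_v : k < v
  lam_pos : 0 < lam
  point_deg : ∀ p : P, (blocks.filter (fun c => p ∈ c)).card = r
  pair_deg : ∀ p q : P, p ≠ q → (blocks.filter (fun c => p ∈ c ∧ q ∈ c)).card = lam

attribute [instance] BIBD.fintypeP BIBD.decEqP

variable {v b r k lam : ℕ}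

/-- A flag of a BIBD: an incident point-block pair `(p, c)` with `p ∈ c`. -/
def BIBD.Flag (D : BIBD v b r k lam) : Type :=
  {pc : D.P × Finset D.P // pc.2 ∈ D.blocks ∧ pc.1 ∈ pc.2}

instance (D : BIBD v b r k lam) : Fintype D.Flag :=
  inferInstanceAs (Fintype {pc : D.P × Finset D.P // pc.2 ∈ D.blocks ∧ pc.1 ∈ pc.2})

instance (D : BIBD v b r k lam) : DecidableEq D.Flag :=
  inferInstanceAs (DecidableEq {pc : D.P × Finset D.P // pc.2 ∈ D.blocks ∧ pc.1 ∈ pc.2})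

/-- The flag-graph `Γ₁(D)`: vertices are the flags of `D`; two distinct flags `(p,c)` and
`(q,d)` are adjacent iff `p = q` or `c = d`. -/
def BIBD.Gamma1 (D : BIBD v b r k lam) : SimpleGraph D.Flag where
  Adj x y := x ≠ y ∧ (x.1.1 = y.1.1 ∨ x.1.2 = y.1.2)
  symm := ⟨fun _ _ h => ⟨h.1.symm, h.2.imp Eq.symm Eq.symm⟩⟩
  loopless := ⟨fun _ h => h.1 rfl⟩

instance (D : BIBD v b r k lam) : DecidableRel D.Gamma1.Adj :=
  fun x y => inferInstanceAs (Decidable (x ≠ y ∧ (x.1.1 = y.1.1 ∨ x.1.2 = y.1.2)))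


/-!
The identity `A + 2 = M Mᵀ` expresses the adjacency matrix through the incidence matrix `M`
between flags and points ⊔ blocks. By the Weinstein–Aronszajn identity,
`det ((t + 2) - M Mᵀ) = (t + 2) ^ (vk - 2v) · det ((t + 2) - Mᵀ M)`, and
`Mᵀ M = [[k, N], [Nᵀ, k]]` with `N` the point–block incidence matrix. For `s = t + 2 - k ≠ 0`
a Schur complement turns the last determinant into `det (s² - N Nᵀ)`, where
`N Nᵀ = (k - λ) + λ J` has an explicit determinant; the count `λ (v - 1) = k (k - 1)` makes it
factor as stated. Both characteristic polynomials then agree at all but one real `t`.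
-/

namespace Matrix

variable {R : Type*} [CommRing R] {m n : Type*} [DecidableEq m] [DecidableEq n]

theorem smul_one_sub_fromBlocks (a : R) (A : Matrix m m R) (B : Matrix m n R)
    (C : Matrix n m R) (D : Matrix n n R) :
    a • 1 - fromBlocks A B C D = fromBlocks (a • 1 - A) (-B) (-C) (a • 1 - D) := by
  rw [← fromBlocks_one, fromBlocks_smul, sub_eq_add_neg, fromBlocks_neg, fromBlocks_add]
  simp [sub_eq_add_neg]

variable [Fintype m] [Fintype n]

theorem det_smul_one_sub_mul_comm (a : R) (A : Matrix m n R) (B : Matrix n m R)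
    (h : Fintype.card n ≤ Fintype.card m) :
    (a • 1 - A * B).det = a ^ (Fintype.card m - Fintype.card n) * (a • 1 - B * A).det := by
  have := congrArg (Polynomial.eval a) (charpoly_mul_comm_of_le A B h)
  simpa [eval_charpoly, smul_one_eq_diagonal] using this

theorem det_smul_one_add_smul_ones [Nonempty n] (y c : R) :
    (y • 1 + c • of fun _ _ : n => (1 : R)).det
      = y ^ (Fintype.card n - 1) * (y + Fintype.card n * c) := by
  have hJ : y • (1 : Matrix n n R) + c • of (fun _ _ => 1)
      = y • (1 : Matrix n n R) -
          replicateCol Unit (fun _ : n => -c) * replicateRow Unit (fun _ : n => (1 : R)) := by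
    ext i j
    simp [mul_apply]
  rw [hJ, det_smul_one_sub_mul_comm _ _ _ (by rw [Fintype.card_unit]; exact Fintype.card_pos)]
  simp [mul_apply, det_unique]

theorem det_fromBlocks_smul_one_smul_one {K : Type*} [Field K] {s : K} (hs : s ≠ 0)
    (B : Matrix m n K) (C : Matrix n m K) (hmn : Fintype.card m = Fintype.card n) :
    (fromBlocks (s • 1) B C (s • 1)).det = (s ^ 2 • 1 - B * C).det := by
  let _ : Invertible (s • (1 : Matrix n n K)) := ⟨s⁻¹ • 1, by simp [hs], by simp [hs]⟩
  have hschur : s • 1 - B * ⅟(s • (1 : Matrix n n K)) * C = s⁻¹ • (s ^ 2 • 1 - B * C) := by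
    rw [show ⅟(s • (1 : Matrix n n K)) = s⁻¹ • 1 from rfl, smul_sub, smul_smul,
      inv_mul_eq_div, pow_two, mul_div_cancel_right₀ _ hs]
    simp
  rw [det_fromBlocks₂₂, hschur, det_smul, det_smul, det_one, ← hmn, mul_one, ← mul_assoc,
    ← mul_pow, mul_inv_cancel₀ hs, one_pow, one_mul]

end Matrix

namespace BIBD

open Matrix

section

variable (D : BIBD v b r k lam)

theorem sum_flag {M : Type*} [AddCommMonoid M] (f : D.P → Finset D.P → M) :
    ∑ x : D.Flag, f x.1.1 x.1.2 = ∑ p, ∑ c ∈ D.blocks with p ∈ c, f p c := by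
  calc ∑ x : D.Flag, f x.1.1 x.1.2
      = ∑ pc : D.P × Finset D.P with pc.2 ∈ D.blocks ∧ pc.1 ∈ pc.2, f pc.1 pc.2 :=
        (Finset.sum_subtype _ (fun _ => Finset.mem_filter_univ _)
          (fun pc : D.P × Finset D.P => f pc.1 pc.2)).symm
    _ = _ := Finset.sum_finset_product _ _ _ (by simp [and_comm])

theorem card_flag : Fintype.card D.Flag = v * r := by
  rw [Fintype.card_eq_sum_ones, D.sum_flag (fun _ _ => 1)]
  simp [D.point_deg, D.card_points]

variable (R : Type*) [CommRing R]

def flagPointIncidence : Matrix D.Flag D.P R :=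
  of fun x p => if x.1.1 = p then 1 else 0

def flagBlockIncidence : Matrix D.Flag D.blocks R :=
  of fun x c => if x.1.2 = c then 1 else 0

def incidence : Matrix D.P D.blocks R := of fun p c => if p ∈ c.1 then 1 else 0

def flagIncidence : Matrix D.Flag (D.P ⊕ D.blocks) R :=
  fromCols (D.flagPointIncidence R) (D.flagBlockIncidence R)

theorem gamma1_adjMatrix_add_two :
    D.Gamma1.adjMatrix R + 2 = D.flagIncidence R * (D.flagIncidence R)ᵀ := by
  ext x y
  have hpoint : (D.flagPointIncidence R * (D.flagPointIncidence R)ᵀ) x y =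
      if x.1.1 = y.1.1 then 1 else 0 := by
    simp [flagPointIncidence, mul_apply]
  have hblock : (D.flagBlockIncidence R * (D.flagBlockIncidence R)ᵀ) x y =
      if x.1.2 = y.1.2 then 1 else 0 := by
    simp only [flagBlockIncidence, mul_apply, transpose_apply, of_apply]
    rw [Finset.sum_coe_sort D.blocks fun c => (if x.1.2 = c then (1 : R) else 0) *
      if y.1.2 = c then 1 else 0]
    simp [y.2.1]
  rw [flagIncidence, transpose_fromCols, fromCols_mul_fromRows, Matrix.add_apply,
    Matrix.add_apply, hpoint, hblock, SimpleGraph.adjMatrix_apply, ofNat_apply]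
  by_cases hxy : x = y
  · subst hxy
    norm_num
  · have hne : x.1.1 ≠ y.1.1 ∨ x.1.2 ≠ y.1.2 := by
      contrapose! hxy
      exact Subtype.ext (Prod.ext hxy.1 hxy.2)
    simp only [Gamma1, ne_eq, hxy, not_false_eq_true, true_and, ↓reduceIte, Nat.cast_zero,
      add_zero]
    rcases hne with h | h <;> simp [h]

theorem flagPointIncidence_transpose_mul :
    (D.flagPointIncidence R)ᵀ * D.flagPointIncidence R = (r : R) • 1 := by
  ext p q
  rw [mul_apply]
  simp only [transpose_apply, flagPointIncidence, of_apply]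
  rw [D.sum_flag (fun p' _ => (if p' = p then (1 : R) else 0) * if p' = q then 1 else 0)]
  simp [one_apply, D.point_deg, eq_comm]

theorem flagBlockIncidence_transpose_mul :
    (D.flagBlockIncidence R)ᵀ * D.flagBlockIncidence R = (k : R) • 1 := by
  ext c d
  rw [mul_apply]
  simp only [transpose_apply, flagBlockIncidence, of_apply]
  rw [D.sum_flag (fun _ c' => (if c' = c then (1 : R) else 0) * if c' = d then 1 else 0)]
  by_cases h : c = d <;> simp [h, D.block_size _ d.2, eq_comm]

theorem flagPointIncidence_transpose_mul_flagBlockIncidence :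
    (D.flagPointIncidence R)ᵀ * D.flagBlockIncidence R = D.incidence R := by
  ext p c
  rw [mul_apply]
  simp only [transpose_apply, flagPointIncidence, flagBlockIncidence, of_apply]
  rw [D.sum_flag (fun p' c' => (if p' = p then (1 : R) else 0) * if c' = c then 1 else 0)]
  simp [incidence]

theorem flagIncidence_transpose_mul :
    (D.flagIncidence R)ᵀ * D.flagIncidence R =
      fromBlocks ((r : R) • 1) (D.incidence R) (D.incidence R)ᵀ ((k : R) • 1) := by
  rw [flagIncidence, transpose_fromCols, fromRows_mul_fromCols,
    flagPointIncidence_transpose_mul, flagBlockIncidence_transpose_mul,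
    ← flagPointIncidence_transpose_mul_flagBlockIncidence, transpose_mul, transpose_transpose]

theorem incidence_mul_transpose :
    D.incidence R * (D.incidence R)ᵀ =
      ((r : R) - lam) • 1 + (lam : R) • of fun _ _ => 1 := by
  ext p q
  simp only [incidence, mul_apply, transpose_apply, of_apply]
  rw [Finset.sum_coe_sort D.blocks fun c => (if p ∈ c then (1 : R) else 0) *
    if q ∈ c then 1 else 0]
  simp only [ite_zero_mul_ite_zero, mul_one, ← Finset.sum_filter, Finset.sum_const,
    nsmul_one]
  by_cases h : p = q
  · subst h
    simp [D.point_deg]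
  · simp [D.pair_deg p q h, h]

end

theorem lam_mul_sub_one (D : BIBD v b r k lam) (R : Type*) [CommRing R] :
    (lam : R) * (v - 1) = r * (k - 1) := by
  obtain ⟨p⟩ : Nonempty D.P :=
    Fintype.card_pos_iff.mp (by have := D.one_lt_k; have := D.k_lt_v; rw [D.card_points]; omega)
  have hrow : D.incidence R *ᵥ (fun _ => 1) = fun _ => (r : R) := by
    ext q
    simp only [incidence, mulVec, dotProduct, of_apply, mul_one]
    rw [Finset.sum_coe_sort D.blocks fun c => if q ∈ c then (1 : R) else 0]
    simp [D.point_deg]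
  have hcol : (D.incidence R)ᵀ *ᵥ (fun _ => 1) = (k : R) • fun _ => 1 := by
    ext c
    simp [incidence, mulVec, dotProduct, D.block_size _ c.2]
  -- apply `N Nᵀ` to the all-ones vector in two ways
  have hcount := congrFun (mulVec_mulVec (fun _ => 1) (D.incidence R) (D.incidence R)ᵀ) p
  have hall : (of fun _ _ => (1 : R) : Matrix D.P D.P R) *ᵥ (fun _ => 1) = fun _ => (v : R) := by
    ext
    simp [mulVec, dotProduct, D.card_points]
  rw [incidence_mul_transpose, hcol, mulVec_smul, hrow, add_mulVec, smul_mulVec, smul_mulVec,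
    one_mulVec, hall] at hcount
  simp only [Pi.smul_apply, smul_eq_mul, Pi.add_apply, mul_one] at hcount
  linear_combination -hcount

theorem eval_charpoly_gamma1_adjMatrix {K : Type*} [Field K] (D : BIBD v v k k lam) {t : K}
    (ht : t + 2 - k ≠ 0) :
    (D.Gamma1.adjMatrix K).charpoly.eval t =
      (t - (2 * k - 2)) * ((t + 2 - k) ^ 2 - (k - lam)) ^ (v - 1) *
        (t + 2) ^ (v * k - 2 * v + 1) := by
  have hk := D.one_lt_k
  have : Nonempty D.P :=
    Fintype.card_pos_iff.mp (by have := D.k_lt_v; rw [D.card_points]; omega)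
  have hcard_blocks : Fintype.card D.blocks = v := by simp [D.card_blocks]
  have hcard_cols : Fintype.card (D.P ⊕ D.blocks) ≤ Fintype.card D.Flag := by
    rw [Fintype.card_sum, D.card_flag, D.card_points, hcard_blocks]
    nlinarith
  have hflag : scalar _ t - D.Gamma1.adjMatrix K =
      (t + 2) • 1 - D.flagIncidence K * (D.flagIncidence K)ᵀ := by
    rw [← gamma1_adjMatrix_add_two]
    ext x y
    by_cases h : x = y <;> simp [h, ofNat_apply]
  have hdual : (t + 2) • 1 - (D.flagIncidence K)ᵀ * D.flagIncidence K =
      fromBlocks ((t + 2 - k) • 1) (-D.incidence K) (-(D.incidence K)ᵀ) ((t + 2 - k) • 1) := by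
    rw [flagIncidence_transpose_mul, smul_one_sub_fromBlocks]
    simp [sub_smul]
  have hgram : (t + 2 - k) ^ 2 • 1 - D.incidence K * (D.incidence K)ᵀ =
      ((t + 2 - k) ^ 2 - (k - lam)) • 1 + (-(lam : K)) • of fun _ _ => 1 := by
    rw [incidence_mul_transpose]
    module
  rw [eval_charpoly, hflag, det_smul_one_sub_mul_comm _ _ _ hcard_cols, hdual,
    det_fromBlocks_smul_one_smul_one ht _ _ (by rw [D.card_points, hcard_blocks]),
    Matrix.neg_mul, Matrix.mul_neg, neg_neg, hgram, det_smul_one_add_smul_ones, D.card_points,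
    D.card_flag, Fintype.card_sum, D.card_points, hcard_blocks,
    show v * k - 2 * v + 1 = v * k - (v + v) + 1 by omega, pow_succ]
  linear_combination (-(t + 2) ^ (v * k - (v + v)) * ((t + 2 - k) ^ 2 - (k - lam)) ^ (v - 1)) *
    D.lam_mul_sub_one K

end BIBD

theorem flagGraph_symmetric_adjMatrix_charpoly_general (D : BIBD v v k k lam)
    (hlk : lam < k) :
    (D.Gamma1.adjMatrix ℝ).charpoly =
      (Polynomial.X - Polynomial.C (2 * (k : ℝ) - 2)) *
      (Polynomial.X -
        Polynomial.C ((k : ℝ) - 2 + Real.sqrt ((k : ℝ) - (lam : ℝ)))) ^ (v - 1) *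
      (Polynomial.X -
        Polynomial.C ((k : ℝ) - 2 - Real.sqrt ((k : ℝ) - (lam : ℝ)))) ^ (v - 1) *
      (Polynomial.X + Polynomial.C 2) ^ (v * k - 2 * v + 1) := by
  have hsqrt : √((k : ℝ) - lam) ^ 2 = k - lam :=
    Real.sq_sqrt (sub_nonneg.mpr (by exact_mod_cast hlk.le))
  refine Polynomial.eq_of_infinite_eval_eq _ _
    ((Set.finite_singleton ((k : ℝ) - 2)).infinite_compl.mono fun t ht => ?_)
  have hconj : (t - (k - 2 + √((k : ℝ) - lam))) * (t - (k - 2 - √((k : ℝ) - lam))) =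
      (t + 2 - k) ^ 2 - (k - lam) := by
    linear_combination -hsqrt
  rw [Set.mem_ofPred_eq,
    D.eval_charpoly_gamma1_adjMatrix fun h => Set.mem_compl_singleton_iff.mp ht (by linarith),
    ← hconj, mul_pow]
  simp only [Polynomial.eval_mul, Polynomial.eval_pow, Polynomial.eval_sub,
    Polynomial.eval_add, Polynomial.eval_X, Polynomial.eval_C]
  ring

/-- The characteristic polynomial of the adjacency matrix of the flag-graph `Γ₁(D)` of a
non-trivial `(v,k,λ)`-symmetric design with `λ < k` is
`(X - (2k-2))·(X - (k-2+√(k-λ)))^(v-1)·(X - (k-2-√(k-λ)))^(v-1)·(X + 2)^(vk-2v+1)`. -/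
theorem flagGraph_symmetric_adjMatrix_charpoly (D : BIBD v v k k lam)
    (hnt : 1 < v - k) (hlk : lam < k) :
    (D.Gamma1.adjMatrix ℝ).charpoly =
      (Polynomial.X - Polynomial.C (2 * (k : ℝ) - 2)) *
      (Polynomial.X -
        Polynomial.C ((k : ℝ) - 2 + Real.sqrt ((k : ℝ) - (lam : ℝ)))) ^ (v - 1) *
      (Polynomial.X -
        Polynomial.C ((k : ℝ) - 2 - Real.sqrt ((k : ℝ) - (lam : ℝ)))) ^ (v - 1) *
      (Polynomial.X + Polynomial.C 2) ^ (v * k - 2 * v + 1) :=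
  flagGraph_symmetric_adjMatrix_charpoly_general D hlk
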